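/- arXiv:2501.17521 — 5 statements merged into one kernel-verified Lean document; each statement's English description precedes it below -/
import Mathlib

section
/- In a locally deterministic theory, conditioning on a full thick-slice specification of the past light cone makes the probability of any complete state of a shielded region equal to 0 or 1. Precisely: suppose T is locally deterministic, sol ω ∈ T for every ω, R, R' ⊆ M are bounded, R' is shielded by R at time t, t' < t < R, g : M → S, C is the thick-slice specification event for (R, t', t, g), f : M → S, A = {ω ∈ Ω : ∀ p ∈ R', sol ω p = f p}, A and C are measurable, and μ(C) > 0. Then μ[A | C] = 0 or μ[A | C] = 1. -/
open MeasureTheory ProbabilityTheory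

noncomputable section

/-- Space: three-dimensional Euclidean space. -/
abbrev SpaceE : Type := EuclideanSpace ℝ (Fin 3)

/-- Spacetime: time × space. -/
abbrev SpacetimeM : Type := ℝ × SpaceE

/-- The cone slice Σ(R, t₀). -/
def coneSlice (R : Set SpacetimeM) (t₀ : ℝ) : Set SpaceE :=
  {x | ∃ p ∈ R, ‖x - p.2‖ ≤ |p.1 - t₀|}

/-- Local determinism of a theory `T`. -/
def LocallyDeterministic {S : Type*} (T : Set (SpacetimeM → S)) : Prop :=
  ∀ R : Set SpacetimeM, Bornology.IsBounded R →
    ∀ t₀ : ℝ, ((∀ p ∈ R, t₀ < p.1) ∨ (∀ p ∈ R, p.1 < t₀)) →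
      ∀ u ∈ T, ∀ v ∈ T,
        (∀ x ∈ coneSlice R t₀, u (t₀, x) = v (t₀, x)) →
        ∀ p ∈ R, u p = v p

/-- `R'` is shielded by `R` at time `t`: `t` lies below `R'`, and every point of
`R'` lies in the causal past of some point of `R`. -/
def ShieldedBy (R' R : Set SpacetimeM) (t : ℝ) : Prop :=
  (∀ p ∈ R', t < p.1) ∧ ∀ p ∈ R', ∃ q ∈ R, q.1 - p.1 ≥ ‖q.2 - p.2‖

/-- The thick-slice specification event: the solution realised by `ω` agrees with
`g` on the thick slice C(Σ(R,t), Σ(R,t')) of the past light cone of `R`. -/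
def thickSliceEvent {Ω : Type*} {S : Type*} (sol : Ω → SpacetimeM → S)
    (R : Set SpacetimeM) (t' t : ℝ) (g : SpacetimeM → S) : Set Ω :=
  {ω | ∀ s ∈ Set.Icc t' t, ∀ x ∈ coneSlice R s, sol ω (s, x) = g (s, x)}

/-- In a locally deterministic theory, conditioning on a full thick-slice
specification of the past light cone makes the probability of any complete state
of a shielded region equal to 0 or 1. -/
theorem thickSlice_cond_zero_or_one
    {Ω : Type*} [MeasurableSpace Ω] (μ : Measure Ω) [IsProbabilityMeasure μ]
    {S : Type*} (T : Set (SpacetimeM → S)) (hT : LocallyDeterministic T)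
    (sol : Ω → SpacetimeM → S) (hsol : ∀ ω, sol ω ∈ T)
    (R R' : Set SpacetimeM) (hR : Bornology.IsBounded R)
    (hR' : Bornology.IsBounded R')
    (t t' : ℝ) (hshield : ShieldedBy R' R t) (ht't : t' < t)
    (htR : ∀ p ∈ R, t < p.1)
    (g : SpacetimeM → S) (C : Set Ω) (hC : C = thickSliceEvent sol R t' t g)
    (f : SpacetimeM → S) (A : Set Ω) (hA : A = {ω | ∀ p ∈ R', sol ω p = f p})
    (hAm : MeasurableSet A) (hCm : MeasurableSet C)
    (hCpos : 0 < μ C) :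
    μ[A | C] = 0 ∨ μ[A | C] = 1 := by
  subst hC hA
  have key : ∀ ω ∈ thickSliceEvent sol R t' t g, ∀ ω' ∈ thickSliceEvent sol R t' t g,
      ∀ p ∈ R', sol ω p = sol ω' p := by
    intro ω hω ω' hω' p hp
    refine hT R' hR' t (Or.inl hshield.1) (sol ω) (hsol ω) (sol ω') (hsol ω') ?_ p hp
    intro x hx
    have hx' : x ∈ coneSlice R t := by
      obtain ⟨p', hp', hle⟩ := hx
      obtain ⟨q, hqR, hq⟩ := hshield.2 p' hp'
      refine ⟨q, hqR, ?_⟩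
      have h1 : |p'.1 - t| = p'.1 - t := abs_of_pos (by linarith [hshield.1 p' hp'])
      have h2 : |q.1 - t| = q.1 - t := abs_of_pos (by linarith [htR q hqR])
      have htri : ‖x - q.2‖ ≤ ‖x - p'.2‖ + ‖p'.2 - q.2‖ := norm_sub_le_norm_sub_add_norm_sub x p'.2 q.2
      have hrev : ‖p'.2 - q.2‖ = ‖q.2 - p'.2‖ := norm_sub_rev _ _
      rw [h2]; rw [h1] at hle; linarith [hq]
    have e1 := hω t ⟨le_of_lt ht't, le_refl t⟩ x hx'
    have e2 := hω' t ⟨le_of_lt ht't, le_refl t⟩ x hx'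
    rw [e1, e2]
  by_cases h : ∃ ω ∈ thickSliceEvent sol R t' t g, ω ∈ {ω | ∀ p ∈ R', sol ω p = f p}
  · right
    obtain ⟨ω₀, hω₀C, hω₀A⟩ := h
    have hsub : thickSliceEvent sol R t' t g ⊆ {ω | ∀ p ∈ R', sol ω p = f p} := by
      intro ω hω p hp
      rw [key ω hω ω₀ hω₀C p hp]; exact hω₀A p hp
    rw [cond_apply hCm, Set.inter_eq_left.mpr hsub]
    exact ENNReal.inv_mul_cancel hCpos.ne' (measure_ne_top μ _)
  · left
    push_neg at h
    have : thickSliceEvent sol R t' t g ∩ {ω | ∀ p ∈ R', sol ω p = f p} = ∅ := by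
      ext ω; simp only [Set.mem_inter_iff, Set.mem_empty_iff_false, iff_false]
      rintro ⟨h1, h2⟩; exact h ω h1 h2
    rw [cond_apply hCm, this, measure_empty, mul_zero]
end
end

section
/- Any locally deterministic theory satisfies (the fine-grained version of) Local Causality: conditioning on any further event beyond the thick-slice specification leaves the probability of a complete state of a shielded region unchanged. Precisely: suppose T is locally deterministic, sol ω ∈ T for every ω, R, R' ⊆ M are bounded, R' is shielded by R at time t, t' < t < R, g : M → S, C is the thick-slice specification event for (R, t', t, g), f : M → S, A = {ω ∈ Ω : ∀ p ∈ R', sol ω p = f p}, A and C are measurable, W is any measurable event, and μ(W ∩ C) > 0. Then μ[A | W ∩ C] = μ[A | C]. -/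
open MeasureTheory ProbabilityTheory

noncomputable section

/-! Shielding gives Σ(R', t) ⊆ Σ(R, t), so local determinism applied to `R'` at time `t`
shows that all outcomes in the thick-slice event `C` realise the same state on `R'`. Hence `A`
is certain or impossible given `C`, and conditioning further on `W` cannot change that. -/

section CondProbability

variable {Ω : Type*} [MeasurableSpace Ω] {μ : Measure Ω} {A B W : Set Ω}

lemma cond_eq_one_of_subset [IsFiniteMeasure μ] (hB : MeasurableSet B) (hB₀ : μ B ≠ 0)
    (hBA : B ⊆ A) : μ[A | B] = 1 := by
  rw [cond_apply hB, Set.inter_eq_left.mpr hBA, ENNReal.inv_mul_cancel hB₀ (measure_ne_top μ B)]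

lemma cond_eq_zero_of_disjoint (hB : MeasurableSet B) (hBA : Disjoint B A) : μ[A | B] = 0 := by
  rw [cond_apply hB, hBA.inter_eq, measure_empty, mul_zero]

/-- `A` is decided on `B`, so both sides are `1` or both are `0`. -/
lemma cond_inter_eq_cond_of_forall_mem_imp [IsFiniteMeasure μ] (hW : MeasurableSet W)
    (hB : MeasurableSet B) (hWB : μ (W ∩ B) ≠ 0)
    (hA : ∀ ω ∈ B, ∀ ω' ∈ B, ω ∈ A → ω' ∈ A) : μ[A | W ∩ B] = μ[A | B] := by
  have hB₀ : μ B ≠ 0 := fun h => hWB (measure_mono_null Set.inter_subset_right h)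
  obtain ⟨ω₀, -, hω₀⟩ := nonempty_of_measure_ne_zero hWB
  by_cases hω₀A : ω₀ ∈ A
  · have hBA : B ⊆ A := fun ω hω => hA ω₀ hω₀ ω hω hω₀A
    rw [cond_eq_one_of_subset (hW.inter hB) hWB (Set.inter_subset_right.trans hBA),
      cond_eq_one_of_subset hB hB₀ hBA]
  · have hBA : Disjoint B A :=
      Set.disjoint_left.mpr fun ω hω hωA => hω₀A (hA ω hω ω₀ hω₀ hωA)
    rw [cond_eq_zero_of_disjoint (hW.inter hB) (hBA.mono_left Set.inter_subset_right),
      cond_eq_zero_of_disjoint hB hBA]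

end CondProbability

lemma ShieldedBy.coneSlice_subset {R' R : Set SpacetimeM} {t : ℝ} (h : ShieldedBy R' R t) :
    coneSlice R' t ⊆ coneSlice R t := by
  rintro x ⟨q, hq, hxq⟩
  obtain ⟨r, hr, hqr⟩ := h.2 q hq
  refine ⟨r, hr, ?_⟩
  rw [abs_of_pos (sub_pos.mpr (h.1 q hq))] at hxq
  calc ‖x - r.2‖ ≤ ‖x - q.2‖ + ‖q.2 - r.2‖ := norm_sub_le_norm_sub_add_norm_sub x q.2 r.2
    _ ≤ (q.1 - t) + (r.1 - q.1) := add_le_add hxq (norm_sub_rev q.2 r.2 ▸ hqr)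
    _ = r.1 - t := by ring
    _ ≤ |r.1 - t| := le_abs_self _

lemma LocallyDeterministic.eqOn_of_shieldedBy {S : Type*} {T : Set (SpacetimeM → S)}
    (hT : LocallyDeterministic T) {R' R : Set SpacetimeM} {t : ℝ}
    (hR' : Bornology.IsBounded R') (hshield : ShieldedBy R' R t) {u v : SpacetimeM → S}
    (hu : u ∈ T) (hv : v ∈ T) (huv : ∀ x ∈ coneSlice R t, u (t, x) = v (t, x)) :
    Set.EqOn u v R' :=
  fun _ hp => hT R' hR' t (Or.inl hshield.1) u hu v hv
    (fun x hx => huv x (hshield.coneSlice_subset hx)) _ hp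

theorem locallyDeterministic_localCausality_fineGrained_general
    {Ω : Type*} [MeasurableSpace Ω] (μ : Measure Ω) [IsProbabilityMeasure μ]
    {S : Type*} (T : Set (SpacetimeM → S)) (hT : LocallyDeterministic T)
    (sol : Ω → SpacetimeM → S) (hsol : ∀ ω, sol ω ∈ T)
    (R R' : Set SpacetimeM)
    (hR' : Bornology.IsBounded R')
    (t t' : ℝ) (hshield : ShieldedBy R' R t) (ht't : t' < t)
    (g : SpacetimeM → S) (C : Set Ω) (hC : C = thickSliceEvent sol R t' t g)
    (f : SpacetimeM → S) (A : Set Ω) (hA : A = {ω | ∀ p ∈ R', sol ω p = f p})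
    (hCm : MeasurableSet C)
    (W : Set Ω) (hWm : MeasurableSet W)
    (hWCpos : 0 < μ (W ∩ C)) :
    μ[A | W ∩ C] = μ[A | C] := by
  subst hC hA
  have hsol_eqOn : ∀ ω ∈ thickSliceEvent sol R t' t g, ∀ ω' ∈ thickSliceEvent sol R t' t g,
      Set.EqOn (sol ω) (sol ω') R' := fun ω hω ω' hω' =>
    hT.eqOn_of_shieldedBy hR' hshield (hsol ω) (hsol ω') fun x hx => by
      rw [hω t ⟨ht't.le, le_rfl⟩ x hx, hω' t ⟨ht't.le, le_rfl⟩ x hx]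
  refine cond_inter_eq_cond_of_forall_mem_imp hWm hCm hWCpos.ne' ?_
  intro ω hω ω' hω' hωA p hp
  rw [← hsol_eqOn ω hω ω' hω' hp]
  exact hωA p hp

/-- Fine-grained half of Theorem 2: any locally deterministic theory satisfies
Local Causality: conditioning on any further event beyond the thick-slice
specification leaves the probability of a complete state of a shielded region
unchanged. -/
theorem locallyDeterministic_localCausality_fineGrained
    {Ω : Type*} [MeasurableSpace Ω] (μ : Measure Ω) [IsProbabilityMeasure μ]
    {S : Type*} (T : Set (SpacetimeM → S)) (hT : LocallyDeterministic T)
    (sol : Ω → SpacetimeM → S) (hsol : ∀ ω, sol ω ∈ T)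
    (R R' : Set SpacetimeM) (hR : Bornology.IsBounded R)
    (hR' : Bornology.IsBounded R')
    (t t' : ℝ) (hshield : ShieldedBy R' R t) (ht't : t' < t)
    (htR : ∀ p ∈ R, t < p.1)
    (g : SpacetimeM → S) (C : Set Ω) (hC : C = thickSliceEvent sol R t' t g)
    (f : SpacetimeM → S) (A : Set Ω) (hA : A = {ω | ∀ p ∈ R', sol ω p = f p})
    (hAm : MeasurableSet A) (hCm : MeasurableSet C)
    (W : Set Ω) (hWm : MeasurableSet W)
    (hWCpos : 0 < μ (W ∩ C)) :
    μ[A | W ∩ C] = μ[A | C] :=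
  locallyDeterministic_localCausality_fineGrained_general μ T hT sol hsol R R' hR' t t' hshield ht't
    g C hC f A hA hCm W hWm hWCpos
end
end

section
/- Any locally deterministic theory violates Settings Independence_{C(Σ,Σ)}. Precisely: suppose T is locally deterministic, sol ω ∈ T for every ω, R, R' ⊆ M are bounded, R' is shielded by R at time t, t' < t < R, g : M → S, C is the thick-slice specification event for (R, t', t, g), and Q₁, Q₂ : (M → S) → Prop are two predicates each depending only on values on R' (i.e., for all u, v : M → S, if u p = v p for all p ∈ R' then Qᵢ u ↔ Qᵢ v) that are mutually exclusive (no u satisfies both Q₁ u and Q₂ u). Let S₁ = {ω : Q₁ (sol ω)} and S₂ = {ω : Q₂ (sol ω)}; assume C, S₁, S₂ are measurable and μ(C) > 0, μ(S₁) > 0, μ(S₂) > 0. Then it is not the case that both μ[C | S₁] = μ(C) and μ[C | S₂] = μ(C). -/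
open MeasureTheory ProbabilityTheory

noncomputable section

/-- Theorem 3 of the paper: any locally deterministic theory violates Settings
Independence: for two mutually exclusive coarse-grained states (settings choices)
of the shielded region `R'`, the probability of the thick-slice specification
cannot be independent of both. -/
theorem locallyDeterministic_violates_settingsIndependence
    {Ω : Type*} [MeasurableSpace Ω] (μ : Measure Ω) [IsProbabilityMeasure μ]
    {S : Type*} (T : Set (SpacetimeM → S)) (hT : LocallyDeterministic T)
    (sol : Ω → SpacetimeM → S) (hsol : ∀ ω, sol ω ∈ T)
    (R R' : Set SpacetimeM) (hR : Bornology.IsBounded R)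
    (hR' : Bornology.IsBounded R')
    (t t' : ℝ) (hshield : ShieldedBy R' R t) (ht't : t' < t)
    (htR : ∀ p ∈ R, t < p.1)
    (g : SpacetimeM → S) (C : Set Ω) (hC : C = thickSliceEvent sol R t' t g)
    (Q₁ Q₂ : (SpacetimeM → S) → Prop)
    (hQ₁ : ∀ u v : SpacetimeM → S, (∀ p ∈ R', u p = v p) → (Q₁ u ↔ Q₁ v))
    (hQ₂ : ∀ u v : SpacetimeM → S, (∀ p ∈ R', u p = v p) → (Q₂ u ↔ Q₂ v))
    (hexcl : ∀ u : SpacetimeM → S, ¬ (Q₁ u ∧ Q₂ u))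
    (S₁ S₂ : Set Ω) (hS₁ : S₁ = {ω | Q₁ (sol ω)}) (hS₂ : S₂ = {ω | Q₂ (sol ω)})
    (hCm : MeasurableSet C) (hS₁m : MeasurableSet S₁) (hS₂m : MeasurableSet S₂)
    (hCpos : 0 < μ C) (hS₁pos : 0 < μ S₁) (hS₂pos : 0 < μ S₂) :
    ¬ (μ[C | S₁] = μ C ∧ μ[C | S₂] = μ C) := by
  rintro ⟨h1, h2⟩
  obtain ⟨hR't, hpast⟩ := hshield
  -- any two solutions in C agree on R'
  have key : ∀ ω ∈ C, ∀ ω' ∈ C, ∀ p ∈ R', sol ω p = sol ω' p := by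
    intro ω hω ω' hω' p hp
    refine hT R' hR' t (Or.inl hR't) (sol ω) (hsol ω) (sol ω') (hsol ω') ?_ p hp
    intro x hx
    obtain ⟨q, hq, hle⟩ := hx
    obtain ⟨r, hr, hrq⟩ := hpast q hq
    have htq : t < q.1 := hR't q hq
    have htr : t < r.1 := htR r hr
    have hx' : x ∈ coneSlice R t := by
      refine ⟨r, hr, ?_⟩
      have tri : ‖x - r.2‖ ≤ ‖x - q.2‖ + ‖q.2 - r.2‖ := norm_sub_le_norm_sub_add_norm_sub _ _ _
      have h2' : ‖q.2 - r.2‖ = ‖r.2 - q.2‖ := norm_sub_rev _ _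
      have habs : |q.1 - t| = q.1 - t := abs_of_pos (by linarith)
      have habs' : |r.1 - t| = r.1 - t := abs_of_pos (by linarith)
      rw [habs']
      rw [habs] at hle
      rw [h2'] at tri
      linarith
    rw [hC] at hω hω'
    have e1 := hω t ⟨le_of_lt ht't, le_refl t⟩ x hx'
    have e2 := hω' t ⟨le_of_lt ht't, le_refl t⟩ x hx'
    rw [e1, e2]
  obtain ⟨ω₀, hω₀⟩ := MeasureTheory.nonempty_of_measure_ne_zero hCpos.ne'
  by_cases hq1 : Q₁ (sol ω₀)
  · -- then C ∩ S₂ = ∅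
    have hdisj : S₂ ∩ C = ∅ := by
      ext ω
      simp only [Set.mem_inter_iff, Set.mem_empty_iff_false, iff_false, not_and]
      intro hωS₂ hωC
      have hQ1ω : Q₁ (sol ω) := (hQ₁ (sol ω₀) (sol ω) (key ω₀ hω₀ ω hωC)).mp hq1
      rw [hS₂] at hωS₂
      exact hexcl (sol ω) ⟨hQ1ω, hωS₂⟩
    have : μ[C | S₂] = 0 := by
      rw [ProbabilityTheory.cond_apply hS₂m, hdisj, measure_empty, mul_zero]
    rw [h2] at this
    exact absurd this hCpos.ne'
  · -- then C ∩ S₁ = ∅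
    have hdisj : S₁ ∩ C = ∅ := by
      ext ω
      simp only [Set.mem_inter_iff, Set.mem_empty_iff_false, iff_false, not_and]
      intro hωS₁ hωC
      have : Q₁ (sol ω₀) := (hQ₁ (sol ω) (sol ω₀) (key ω hωC ω₀ hω₀)).mp (by rw [hS₁] at hωS₁; exact hωS₁)
      exact hq1 this
    have : μ[C | S₁] = 0 := by
      rw [ProbabilityTheory.cond_apply hS₁m, hdisj, measure_empty, mul_zero]
    rw [h1] at this
    exact absurd this hCpos.ne'
end
end

section
/- In a locally deterministic theory, any full cone-slice specification is compatible with exactly one choice of settings. Precisely: suppose T is locally deterministic, R' ⊆ M is bounded, t < R', g : E → S, there exists at least one u ∈ T with u (t, x) = g x for all x ∈ Σ(R', t), and Φ : (M → S) → V is a map into a type V of setting values depending only on values on R' (i.e., for all u, v : M → S, if u p = v p for all p ∈ R' then Φ u = Φ v). Then there exists exactly one v ∈ V such that some u ∈ T satisfies both u (t, x) = g x for all x ∈ Σ(R', t) and Φ u = v. -/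
open MeasureTheory ProbabilityTheory

noncomputable section

/-- In a locally deterministic theory, any full cone-slice specification is
compatible with exactly one choice of settings: there is exactly one setting
value `v` realised in the settings region `R'` by solutions agreeing with `g`
on the cone slice Σ(R', t). -/
theorem coneSlice_compatible_with_unique_setting
    {S : Type*} (T : Set (SpacetimeM → S)) (hT : LocallyDeterministic T)
    (R' : Set SpacetimeM) (hR' : Bornology.IsBounded R')
    (t : ℝ) (htR' : ∀ p ∈ R', t < p.1)
    (g : SpaceE → S)
    (hex : ∃ u ∈ T, ∀ x ∈ coneSlice R' t, u (t, x) = g x)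
    {V : Type*} (Φ : (SpacetimeM → S) → V)
    (hΦ : ∀ u v : SpacetimeM → S, (∀ p ∈ R', u p = v p) → Φ u = Φ v) :
    ∃! v : V, ∃ u ∈ T, (∀ x ∈ coneSlice R' t, u (t, x) = g x) ∧ Φ u = v := by
  obtain ⟨u₀, hu₀T, hu₀g⟩ := hex
  refine ⟨Φ u₀, ⟨u₀, hu₀T, hu₀g, rfl⟩, ?_⟩
  rintro v ⟨u, huT, hug, rfl⟩
  exact hΦ u u₀ (hT R' hR' t (Or.inl htR') u huT u₀ hu₀T
    (fun x hx => (hug x hx).trans (hu₀g x hx).symm))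
end
end

section
/- The Bell–CHSH inequality for factorizable models: let ρ be a probability measure on a measurable space Λ, and let f, f', g, g' : Λ → ℝ be measurable functions with |f λ| ≤ 1, |f' λ| ≤ 1, |g λ| ≤ 1, |g' λ| ≤ 1 for all λ ∈ Λ. Then |∫ f·g dρ + ∫ f·g' dρ + ∫ f'·g dρ − ∫ f'·g' dρ| ≤ 2. -/
/-!
Pointwise, `a b + a b' + a' b - a' b' = a (b + b') + a' (b - b')`, and for `|b|, |b'| ≤ 1`
one has `|b + b'| + |b - b'| = 2 max (|b|, |b'|) ≤ 2`; so the CHSH combination of the local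
values lies in `[-2, 2]` for every hidden state. Integrating against the probability
measure `ρ` preserves this bound, and by linearity the integral of the pointwise combination
is the combination of the correlations.
-/

open MeasureTheory

section Pointwise

variable {α : Type*} [CommRing α] [LinearOrder α] [IsStrictOrderedRing α]

lemma abs_add_add_abs_sub_le_two {b b' : α} (hb : |b| ≤ 1) (hb' : |b'| ≤ 1) :
    |b + b'| + |b - b'| ≤ 2 := by
  rcases abs_le.mp hb with ⟨hb₁, hb₂⟩
  rcases abs_le.mp hb' with ⟨hb'₁, hb'₂⟩
  rcases abs_cases (b + b') with ⟨hs, -⟩ | ⟨hs, -⟩ <;>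
    rcases abs_cases (b - b') with ⟨hd, -⟩ | ⟨hd, -⟩ <;>
    linarith

lemma abs_chsh_le_two {a a' b b' : α} (ha : |a| ≤ 1) (ha' : |a'| ≤ 1)
    (hb : |b| ≤ 1) (hb' : |b'| ≤ 1) :
    |a * b + a * b' + a' * b - a' * b'| ≤ 2 :=
  calc |a * b + a * b' + a' * b - a' * b'|
      = |a * (b + b') + a' * (b - b')| := by ring_nf
    _ ≤ |a| * |b + b'| + |a'| * |b - b'| := by
      rw [← abs_mul, ← abs_mul]
      exact abs_add_le _ _
    _ ≤ |b + b'| + |b - b'| :=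
      add_le_add (mul_le_of_le_one_left (abs_nonneg _) ha)
        (mul_le_of_le_one_left (abs_nonneg _) ha')
    _ ≤ 2 := abs_add_add_abs_sub_le_two hb hb'

end Pointwise

lemma integrable_mul_of_abs_le_one {Λ : Type*} [MeasurableSpace Λ] {μ : Measure Λ}
    [IsFiniteMeasure μ] {u v : Λ → ℝ} (hu : AEStronglyMeasurable u μ)
    (hv : AEStronglyMeasurable v μ) (hub : ∀ l, |u l| ≤ 1) (hvb : ∀ l, |v l| ≤ 1) :
    Integrable (fun l => u l * v l) μ :=
  (Integrable.of_bound hv 1 (ae_of_all _ hvb)).bdd_mul hu (ae_of_all _ hub)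

/-- The Bell–CHSH inequality for factorizable models: for a probability measure
`ρ` over hidden states and measurable single-wing expectation functions
`f, f', g, g'` bounded by 1 in absolute value, the CHSH combination of the
correlations is bounded by 2. -/
theorem bell_chsh_inequality
    {Λ : Type*} [MeasurableSpace Λ] (ρ : Measure Λ) [IsProbabilityMeasure ρ]
    (f f' g g' : Λ → ℝ)
    (hf : Measurable f) (hf' : Measurable f')
    (hg : Measurable g) (hg' : Measurable g')
    (hfb : ∀ l, |f l| ≤ 1) (hf'b : ∀ l, |f' l| ≤ 1)
    (hgb : ∀ l, |g l| ≤ 1) (hg'b : ∀ l, |g' l| ≤ 1) :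
    |(∫ l, f l * g l ∂ρ) + (∫ l, f l * g' l ∂ρ) +
      (∫ l, f' l * g l ∂ρ) - (∫ l, f' l * g' l ∂ρ)| ≤ 2 := by
  have hfg := integrable_mul_of_abs_le_one (μ := ρ) hf.aestronglyMeasurable
    hg.aestronglyMeasurable hfb hgb
  have hfg' := integrable_mul_of_abs_le_one (μ := ρ) hf.aestronglyMeasurable
    hg'.aestronglyMeasurable hfb hg'b
  have hf'g := integrable_mul_of_abs_le_one (μ := ρ) hf'.aestronglyMeasurable
    hg.aestronglyMeasurable hf'b hgb
  have hf'g' := integrable_mul_of_abs_le_one (μ := ρ) hf'.aestronglyMeasurable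
    hg'.aestronglyMeasurable hf'b hg'b
  have hlinear : ∫ l, f l * g l + f l * g' l + f' l * g l - f' l * g' l ∂ρ =
      (∫ l, f l * g l ∂ρ) + (∫ l, f l * g' l ∂ρ) +
        (∫ l, f' l * g l ∂ρ) - (∫ l, f' l * g' l ∂ρ) := by
    rw [integral_sub, integral_add, integral_add hfg hfg']
    exacts [hfg.add hfg', hf'g, (hfg.add hfg').add hf'g, hf'g']
  rw [← hlinear]
  calc |∫ l, f l * g l + f l * g' l + f' l * g l - f' l * g' l ∂ρ|
      ≤ 2 * ρ.real Set.univ := by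
        rw [← Real.norm_eq_abs]
        exact norm_integral_le_of_norm_le_const <|
          ae_of_all _ fun l => abs_chsh_le_two (hfb l) (hf'b l) (hgb l) (hg'b l)
    _ = 2 := by simp
end
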